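/- Let C be a category with an initial object k and binary coproducts, and let (H, Δ, ε, S) be a Zhang algebra of C. Then the coproduct Δ is compatible with the adjoint coaction: Ω_c^{(2)} ∘ Δ = (id_H ⊔ Δ) ∘ Ω_c as morphisms H → H ⊔ (H ⊔ H), where id_H ⊔ Δ applies Δ to the second coproduct factor of H ⊔ H. -/

import Mathlib

open CategoryTheory CategoryTheory.Limits

universe u v

/-- The adjoint coaction `Ω_c := (ι₁ ⊔̇ ι₂ ⊔̇ ι₁) ∘ (id_{H⊔H} ⊔ S) ∘ (Δ ⊔ id_H) ∘ Δ` of a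
Zhang algebra on itself; the first coproduct factor is the coacting copy and the second the
comodule copy. -/
noncomputable def adjointCoaction {C : Type u} [Category.{v} C] [HasBinaryCoproducts C]
    (H : C) (Δ : H ⟶ H ⨿ H) (S : H ⟶ H) : H ⟶ H ⨿ H :=
  Δ ≫ coprod.map Δ (𝟙 H) ≫ coprod.map (𝟙 (H ⨿ H)) S ≫
    coprod.desc (coprod.desc coprod.inl coprod.inr) coprod.inl

/-- The induced coaction `Ω_c² := (j₁ ⊔̇ j₂ ⊔̇ j₁ ⊔̇ j₃) ∘ (Ω_c ⊔ Ω_c) : H ⊔ H → H ⊔ (H ⊔ H)`,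
where `j₁, j₂, j₃ : H → H ⊔ (H ⊔ H)` are the three canonical injections: the coacting letters
of both copies are gathered into the first factor, while the comodule letters of the first
and second copies go to the second and third factors respectively. -/
noncomputable def adjointCoaction₂ {C : Type u} [Category.{v} C] [HasBinaryCoproducts C]
    (H : C) (Δ : H ⟶ H ⨿ H) (S : H ⟶ H) : H ⨿ H ⟶ H ⨿ (H ⨿ H) :=
  coprod.map (adjointCoaction H Δ S) (adjointCoaction H Δ S) ≫
    coprod.desc
      (coprod.desc coprod.inl (coprod.inl ≫ coprod.inr))
      (coprod.desc coprod.inl (coprod.inr ≫ coprod.inr))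

/-! For `f g : H ⟶ X` the morphism `Δ ≫ coprod.desc f g` is the convolution `f ⋆ g`, in Sweedler
notation `h ↦ f(h₁) g(h₂)`. The adjoint coaction is `Ω_c = (ι₁ ⋆ ι₂) ⋆ (S ≫ ι₁)`, and both sides
of the theorem become convolution words in the injections `j₁, j₂, j₃` into `H ⨿ (H ⨿ H)`: the left
side is `(j₁ ⋆ j₂ ⋆ S j₁) ⋆ (j₁ ⋆ j₃ ⋆ S j₁)`, the right side `j₁ ⋆ (j₂ ⋆ j₃) ⋆ S j₁`. They agree
because the middle factor `S j₁ ⋆ j₁` collapses to the unit by the antipode and counit axioms. -/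

noncomputable def coprodConv {C : Type u} [Category.{v} C] [HasBinaryCoproducts C] {H X : C}
    (Δ : H ⟶ H ⨿ H) (f g : H ⟶ X) : H ⟶ X :=
  Δ ≫ coprod.desc f g

section Convolution

variable {C : Type u} [Category.{v} C] [HasBinaryCoproducts C] {H X Y : C} (Δ : H ⟶ H ⨿ H)

theorem coprodConv_comp (f g : H ⟶ X) (k : X ⟶ Y) :
    coprodConv Δ f g ≫ k = coprodConv Δ (f ≫ k) (g ≫ k) := by
  simp [coprodConv]

theorem coprodConv_assoc
    (hcoassoc : Δ ≫ coprod.map Δ (𝟙 H) ≫ (coprod.associator H H H).hom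
      = Δ ≫ coprod.map (𝟙 H) Δ)
    (f g k : H ⟶ X) :
    coprodConv Δ (coprodConv Δ f g) k = coprodConv Δ f (coprodConv Δ g k) := by
  have hleft : coprodConv Δ (coprodConv Δ f g) k
      = Δ ≫ coprod.map Δ (𝟙 H) ≫ (coprod.associator H H H).hom
          ≫ coprod.desc f (coprod.desc g k) := by
    simp [coprodConv, coprod.inl_desc, coprod.inr_desc]
  rw [hleft, reassoc_of% hcoassoc]
  simp [coprodConv]

theorem adjointCoaction_eq_coprodConv (S : H ⟶ H) :
    adjointCoaction H Δ S
      = coprodConv Δ (coprodConv Δ coprod.inl coprod.inr) (S ≫ coprod.inl) := by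
  simp [adjointCoaction, coprodConv]

theorem adjointCoaction_comp_desc (S : H ⟶ H) (f g : H ⟶ X) :
    adjointCoaction H Δ S ≫ coprod.desc f g
      = coprodConv Δ (coprodConv Δ f g) (S ≫ f) := by
  rw [adjointCoaction_eq_coprodConv, coprodConv_comp, coprodConv_comp]
  simp only [coprod.inl_desc, coprod.inr_desc, Category.assoc]

variable [HasInitial C] (ε : H ⟶ ⊥_ C) (S : H ⟶ H)

theorem coprodConv_counit_left
    (hcounit_l : Δ ≫ coprod.desc (ε ≫ initial.to H) (𝟙 H) = 𝟙 H) (f : H ⟶ X) :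
    coprodConv Δ (ε ≫ initial.to X) f = f := by
  simpa [coprodConv] using congrArg (· ≫ f) hcounit_l

theorem coprodConv_antipode_left
    (hantipode_l : Δ ≫ coprod.desc S (𝟙 H) = ε ≫ initial.to H) (f : H ⟶ X) :
    coprodConv Δ (S ≫ f) f = ε ≫ initial.to X := by
  simpa [coprodConv] using congrArg (· ≫ f) hantipode_l

theorem coprodConv_adjoint_mul
    (hcoassoc : Δ ≫ coprod.map Δ (𝟙 H) ≫ (coprod.associator H H H).hom
      = Δ ≫ coprod.map (𝟙 H) Δ)
    (hcounit_l : Δ ≫ coprod.desc (ε ≫ initial.to H) (𝟙 H) = 𝟙 H)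
    (hantipode_l : Δ ≫ coprod.desc S (𝟙 H) = ε ≫ initial.to H) (a b c : H ⟶ X) :
    coprodConv Δ (coprodConv Δ (coprodConv Δ a b) (S ≫ a))
        (coprodConv Δ (coprodConv Δ a c) (S ≫ a))
      = coprodConv Δ (coprodConv Δ a (coprodConv Δ b c)) (S ≫ a) := by
  have hcancel (d : H ⟶ X) : coprodConv Δ (S ≫ a) (coprodConv Δ a d) = d := by
    rw [← coprodConv_assoc Δ hcoassoc, coprodConv_antipode_left Δ ε S hantipode_l,
      coprodConv_counit_left Δ ε hcounit_l]
  simp only [coprodConv_assoc Δ hcoassoc, hcancel]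

end Convolution

theorem zhang_coproduct_adjointCoaction_general
    {C : Type u} [Category.{v} C] [HasInitial C] [HasBinaryCoproducts C]
    (H : C) (Δ : H ⟶ H ⨿ H) (ε : H ⟶ ⊥_ C) (S : H ⟶ H)
    (hcoassoc : Δ ≫ coprod.map Δ (𝟙 H) ≫ (coprod.associator H H H).hom
      = Δ ≫ coprod.map (𝟙 H) Δ)
    (hcounit_l : Δ ≫ coprod.desc (ε ≫ initial.to H) (𝟙 H) = 𝟙 H)
    (hantipode_l : Δ ≫ coprod.desc S (𝟙 H) = ε ≫ initial.to H) :
    Δ ≫ adjointCoaction₂ H Δ S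
      = adjointCoaction H Δ S ≫ coprod.map (𝟙 H) Δ := by
  have hmap : coprod.map (𝟙 H) Δ = coprod.desc coprod.inl
      (coprodConv Δ (coprod.inl ≫ coprod.inr) (coprod.inr ≫ coprod.inr)) := by
    rw [← coprodConv_comp, coprodConv, coprod.desc_inl_inr, Category.comp_id]
    ext <;> simp [coprod.inl_desc, coprod.inr_desc]
  have hleft : Δ ≫ adjointCoaction₂ H Δ S
      = coprodConv Δ
          (adjointCoaction H Δ S ≫ coprod.desc coprod.inl (coprod.inl ≫ coprod.inr))
          (adjointCoaction H Δ S ≫ coprod.desc coprod.inl (coprod.inr ≫ coprod.inr)) := by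
    simp [adjointCoaction₂, coprodConv]
  rw [hleft, hmap, adjointCoaction_comp_desc, adjointCoaction_comp_desc,
    adjointCoaction_comp_desc, coprodConv_adjoint_mul Δ ε S hcoassoc hcounit_l hantipode_l]

/-- For a Zhang algebra `(H, Δ, ε, S)`, the coproduct `Δ` is compatible with
the adjoint coaction: `Ω_c² ∘ Δ = (id_H ⊔ Δ) ∘ Ω_c : H → H ⊔ (H ⊔ H)`. -/
theorem zhang_coproduct_adjointCoaction
    {C : Type u} [Category.{v} C] [HasInitial C] [HasBinaryCoproducts C]
    (H : C) (Δ : H ⟶ H ⨿ H) (ε : H ⟶ ⊥_ C) (S : H ⟶ H)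
    (hcoassoc : Δ ≫ coprod.map Δ (𝟙 H) ≫ (coprod.associator H H H).hom
      = Δ ≫ coprod.map (𝟙 H) Δ)
    (hcounit_l : Δ ≫ coprod.desc (ε ≫ initial.to H) (𝟙 H) = 𝟙 H)
    (hcounit_r : Δ ≫ coprod.desc (𝟙 H) (ε ≫ initial.to H) = 𝟙 H)
    (hantipode_l : Δ ≫ coprod.desc S (𝟙 H) = ε ≫ initial.to H)
    (hantipode_r : Δ ≫ coprod.desc (𝟙 H) S = ε ≫ initial.to H) :
    Δ ≫ adjointCoaction₂ H Δ S
      = adjointCoaction H Δ S ≫ coprod.map (𝟙 H) Δ :=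
  zhang_coproduct_adjointCoaction_general H Δ ε S hcoassoc hcounit_l hantipode_l
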